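/- Let γ > 0 and suppose X(z) = 1 + Σ_{ℓ≥1} x_ℓ z^ℓ is a formal power series, and for each Łukasiewicz path define the x-dependent weight wt_x(Γ) as the usual weight but with (c₁ − x) in place of c₁ for horizontal steps at height 0 (where c₁ is a fixed scalar). If X(z) = Σ_{ℓ≥0} Σ_{Γ∈L(ℓ)} wt_0(Γ) z^ℓ, then Σ_{ℓ≥0} Σ_{Γ∈L(ℓ)} wt_x(Γ) z^ℓ = X(z) · Σ_{m≥0} (−x·z·X(z))^m, as an identity of formal power series in z. -/

import Mathlib

def IsLuk (s : List ℤ) : Prop :=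
  (∀ z ∈ s, -1 ≤ z) ∧ (∀ n : ℕ, 0 ≤ (s.take n).sum) ∧ s.sum = 0

/-- Height of the path before step `k`. -/
def ht (s : List ℤ) (k : ℕ) : ℤ := (s.take k).sum

open Finset in
/-- The weight of a Łukasiewicz path with a general multiplicative step weight
`w z h` (step value `z`, height `h` before the step). -/
noncomputable def wtStep (w : ℤ → ℕ → ℝ) (s : List ℤ) : ℝ :=
  ∏ k ∈ Finset.range s.length, w (s.getD k 0) (ht s k).toNat

open Finset in
/-- The `x`-dependent weight: as `wtStep`, but with `c₁ - x` in place of the weight of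
each horizontal step at height `0`. -/
noncomputable def wtStepX (x c₁ : ℝ) (w : ℤ → ℕ → ℝ) (s : List ℤ) : ℝ :=
  ∏ k ∈ Finset.range s.length,
    if s.getD k 0 = 0 ∧ ht s k = 0 then (c₁ - x) else w (s.getD k 0) (ht s k).toNat

/-! Write `Y(z)` for the generating series of the weights `wt_x`. Splitting each factor
`c₁ - x = c₁ + (-x)` of `wt_x(Γ)` and expanding around the last height-`0` horizontal step of `Γ`
that receives `-x` (`Finset.prod_add_ordered`), then cutting `Γ` there into a path weighted by
`wt_x` and one weighted by `wt_0`, gives `Y = X + Y·(-x z X)`. Iterating,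
`Y = X·Σ_{m<N} (-x z X)^m + Y·(-x z X)^N`, and the last term does not reach `z^n` once `N > n`. -/

open Finset

theorem eq_mul_sum_range_pow_add_mul_pow_of_eq_add_mul {R : Type*} [Semiring R] {f g t : R}
    (h : g = f + g * t) (N : ℕ) : g = f * ∑ m ∈ range N, t ^ m + g * t ^ N := by
  induction N with
  | zero => simp
  | succ N ih =>
    calc g = f * ∑ m ∈ range N, t ^ m + (f + g * t) * t ^ N := by rw [← h]; exact ih
      _ = f * ∑ m ∈ range (N + 1), t ^ m + g * t ^ (N + 1) := by
        rw [sum_range_succ, pow_succ', mul_add, add_mul, mul_assoc, add_assoc]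

namespace PowerSeries

variable {R : Type*}

theorem coeff_eq_sum_coeff_mul_pow_of_eq_add_mul [CommSemiring R] {f g t : R⟦X⟧}
    (h : g = f + g * t) (ht : X ∣ t) (n : ℕ) :
    coeff n g = ∑ m ∈ range (n + 1), coeff n (f * t ^ m) := by
  have hvanish : coeff n (g * t ^ (n + 1)) = 0 :=
    X_pow_dvd_iff.mp (dvd_mul_of_dvd_right (pow_dvd_pow_of_dvd ht _) g) n n.lt_succ_self
  conv_lhs => rw [eq_mul_sum_range_pow_add_mul_pow_of_eq_add_mul h (n + 1)]
  rw [map_add, hvanish, add_zero, mul_sum, map_sum]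

theorem coeff_X_mul_mul [CommSemiring R] (f g : R⟦X⟧) (n : ℕ) :
    coeff n (X * (f * g)) = ∑ j ∈ range n, coeff j f * coeff (n - 1 - j) g := by
  cases n with
  | zero => simp
  | succ n =>
    rw [coeff_succ_X_mul, coeff_mul, Nat.sum_antidiagonal_eq_sum_range_succ_mk]
    simp only [Nat.add_sub_cancel]

end PowerSeries

theorem List.finite_setOf_length_eq_forall_mem {α : Type*} {T : Set α} (hT : T.Finite) (n : ℕ) :
    {s : List α | s.length = n ∧ ∀ z ∈ s, z ∈ T}.Finite := by
  have := hT.to_subtype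
  refine ((List.finite_length_eq T n).image (List.map Subtype.val)).subset ?_
  rintro s ⟨hlen, hs⟩
  lift s to List T using hs
  exact ⟨s, by simpa using hlen, rfl⟩

theorem IsLuk.mem_Icc {s : List ℤ} (hs : IsLuk s) {z : ℤ} (hz : z ∈ s) :
    z ∈ Set.Icc (-1 : ℤ) s.length := by
  obtain ⟨t, u, rfl⟩ := List.append_of_mem hz
  have hlow : ∀ l : List ℤ, l ⊆ t ++ z :: u → -(l.length : ℤ) ≤ l.sum := fun l hl => by
    simpa using List.card_nsmul_le_sum l (-1) fun y hy => hs.1 y (hl hy)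
  have ht := hlow t (by simp)
  have hu := hlow u (by simp)
  have hsum : t.sum + (z + u.sum) = 0 := by simpa using hs.2.2
  exact ⟨hs.1 z hz, by simp; omega⟩

theorem setOf_length_eq_isLuk_finite (n : ℕ) : {s : List ℤ | s.length = n ∧ IsLuk s}.Finite :=
  (List.finite_setOf_length_eq_forall_mem (Set.finite_Icc (-1 : ℤ) n) n).subset
    fun _ ⟨hlen, hs⟩ => ⟨hlen, fun _ hz => hlen ▸ hs.mem_Icc hz⟩

noncomputable def lukPaths (n : ℕ) : Finset (List ℤ) := (setOf_length_eq_isLuk_finite n).toFinset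

theorem mem_lukPaths {n : ℕ} {s : List ℤ} : s ∈ lukPaths n ↔ s.length = n ∧ IsLuk s :=
  Set.Finite.mem_toFinset _

theorem finsum_mem_setOf_isLuk {M : Type*} [AddCommMonoid M] (f : List ℤ → M) (n : ℕ) :
    ∑ᶠ s ∈ {s : List ℤ | s.length = n ∧ IsLuk s}, f s = ∑ s ∈ lukPaths n, f s := by
  rw [← finsum_mem_coe_finset, lukPaths, Set.Finite.coe_toFinset]

theorem ht_succ {s : List ℤ} {k : ℕ} (hk : k < s.length) : ht s (k + 1) = ht s k + s.getD k 0 := by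
  rw [ht, ht, List.take_add_one, List.sum_append]
  simp [List.getElem?_eq_getElem hk]

theorem ht_take (s : List ℤ) {j k : ℕ} (hk : k ≤ j) : ht (s.take j) k = ht s k := by
  rw [ht, ht, List.take_take, Nat.min_eq_left hk]

theorem ht_add (s : List ℤ) (m k : ℕ) : ht s (m + k) = ht s m + ht (s.drop m) k := by
  rw [ht, ht, ht, List.take_add, List.sum_append]

theorem getD_take (s : List ℤ) {j k : ℕ} (hk : k < j) : (s.take j).getD k 0 = s.getD k 0 := by
  simp [hk]

theorem getD_drop (s : List ℤ) (m k : ℕ) : (s.drop m).getD k 0 = s.getD (m + k) 0 := by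
  simp [List.getElem?_drop]

theorem IsLuk.take {s : List ℤ} (hs : IsLuk s) {j : ℕ} (h0 : ht s j = 0) : IsLuk (s.take j) :=
  ⟨fun _ hz => hs.1 _ (List.mem_of_mem_take hz), fun k => by rw [List.take_take]; exact hs.2.1 _,
    h0⟩

theorem IsLuk.drop {s : List ℤ} (hs : IsLuk s) {j : ℕ} (h0 : ht s j = 0) : IsLuk (s.drop j) := by
  refine ⟨fun _ hz => hs.1 _ (List.mem_of_mem_drop hz), fun k => ?_, ?_⟩
  · have h := ht_add s j k
    rw [h0, zero_add] at h
    exact show 0 ≤ ht (s.drop j) k from h ▸ hs.2.1 (j + k)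
  · have h := hs.2.2
    rw [← List.take_append_drop j s, List.sum_append] at h
    rwa [← ht, h0, zero_add] at h

theorem IsLuk.append_zero_cons {a b : List ℤ} (ha : IsLuk a) (hb : IsLuk b) :
    IsLuk (a ++ 0 :: b) := by
  refine ⟨fun z hz => ?_, fun k => ?_, by simp [ha.2.2, hb.2.2]⟩
  · rcases List.mem_append.mp hz with h | h
    · exact ha.1 z h
    · exact (List.forall_mem_cons.2 ⟨by simp, hb.1⟩) z h
  · rw [List.take_append, List.sum_append]
    have hb' : 0 ≤ ((0 :: b).take (k - a.length)).sum := by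
      cases k - a.length with
      | zero => simp
      | succ m => simpa using hb.2.1 m
    exact add_nonneg (ha.2.1 k) hb'

section Weights

variable (x c₁ : ℝ) (w : ℤ → ℕ → ℝ)

theorem wtStepX_take (s : List ℤ) {j : ℕ} (hj : j ≤ s.length) :
    wtStepX x c₁ w (s.take j) = ∏ k ∈ range j,
      if s.getD k 0 = 0 ∧ ht s k = 0 then c₁ - x else w (s.getD k 0) (ht s k).toNat := by
  rw [wtStepX, List.length_take, Nat.min_eq_left hj]
  refine prod_congr rfl fun k hk => ?_
  rw [getD_take s (mem_range.1 hk), ht_take s (mem_range.1 hk).le]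

theorem wtStep_drop (s : List ℤ) {m : ℕ} (h0 : ht s m = 0) :
    wtStep w (s.drop m) = ∏ k ∈ Ico m s.length, w (s.getD k 0) (ht s k).toNat := by
  rw [wtStep, prod_Ico_eq_prod_range, List.length_drop]
  refine prod_congr rfl fun k _ => ?_
  rw [getD_drop, ht_add, h0, zero_add]

variable {x c₁ w}

theorem wtStepX_eq_wtStep_add_sum (hw : w 0 0 = c₁) (s : List ℤ) :
    wtStepX x c₁ w s = wtStep w s + ∑ j ∈ range s.length,
      if s.getD j 0 = 0 ∧ ht s j = 0 then
        wtStepX x c₁ w (s.take j) * (-x) * wtStep w (s.drop (j + 1)) else 0 := by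
  have hfactor : ∀ k, (if s.getD k 0 = 0 ∧ ht s k = 0 then c₁ - x
      else w (s.getD k 0) (ht s k).toNat) =
      w (s.getD k 0) (ht s k).toNat + if s.getD k 0 = 0 ∧ ht s k = 0 then -x else 0 := by
    intro k
    split_ifs with h
    · rw [h.1, h.2, Int.toNat_zero, hw]
      ring
    · ring
  rw [wtStepX, prod_congr rfl fun k _ => hfactor k, prod_add_ordered]
  congr 1
  refine sum_congr rfl fun j hj => ?_
  have hj := mem_range.1 hj
  split_ifs with h
  · have hpre : {k ∈ range s.length | k < j} = range j := by ext; simp; omega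
    have hsuf : {k ∈ range s.length | j < k} = Ico (j + 1) s.length := by ext; simp; omega
    have h0 : ht s (j + 1) = 0 := by rw [ht_succ hj, h.1, h.2, add_zero]
    rw [hpre, hsuf, wtStepX_take x c₁ w s hj.le, wtStep_drop w s h0]
    simp only [← hfactor]
    ring
  · simp

end Weights

theorem sum_lukPaths_cut {M : Type*} [AddCommMonoid M] (f : List ℤ → List ℤ → M) {n j : ℕ}
    (hj : j < n) :
    ∑ s ∈ lukPaths n with s.getD j 0 = 0 ∧ ht s j = 0, f (s.take j) (s.drop (j + 1)) =
      ∑ a ∈ lukPaths j, ∑ b ∈ lukPaths (n - 1 - j), f a b := by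
  rw [← sum_product']
  refine sum_nbij' (fun s => (s.take j, s.drop (j + 1))) (fun p => p.1 ++ 0 :: p.2)
    ?_ ?_ ?_ ?_ fun _ _ => rfl
  · intro s hs
    obtain ⟨hs, hget, h0⟩ := mem_filter.1 hs
    obtain ⟨hlen, hluk⟩ := mem_lukPaths.1 hs
    have h1 : ht s (j + 1) = 0 := by rw [ht_succ (hlen ▸ hj), hget, h0, add_zero]
    simp only [mem_product, mem_lukPaths, List.length_take, List.length_drop]
    exact ⟨⟨by omega, hluk.take h0⟩, ⟨by omega, hluk.drop h1⟩⟩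
  · rintro ⟨a, b⟩ hp
    simp only [mem_product, mem_lukPaths] at hp
    obtain ⟨⟨rfl, ha⟩, ⟨hlen, hb⟩⟩ := hp
    simp only [mem_filter, mem_lukPaths]
    refine ⟨⟨by simp; omega, ha.append_zero_cons hb⟩, by simp, ?_⟩
    rw [ht, List.take_left]
    exact ha.2.2
  · intro s hs
    obtain ⟨hs, hget, -⟩ := mem_filter.1 hs
    have hj' : j < s.length := (mem_lukPaths.1 hs).1 ▸ hj
    have hget' : s[j] = 0 := by simpa [List.getElem?_eq_getElem hj'] using hget
    conv_rhs => rw [← List.take_append_drop j s, List.drop_eq_getElem_cons hj', hget']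
  · rintro ⟨a, b⟩ hp
    simp only [mem_product, mem_lukPaths] at hp
    obtain ⟨⟨rfl, -⟩, -⟩ := hp
    simp

theorem sum_lukPaths_wtStepX {x c₁ : ℝ} {w : ℤ → ℕ → ℝ} (hw : w 0 0 = c₁) (n : ℕ) :
    ∑ s ∈ lukPaths n, wtStepX x c₁ w s = ∑ s ∈ lukPaths n, wtStep w s +
      (-x) * ∑ j ∈ range n,
        (∑ a ∈ lukPaths j, wtStepX x c₁ w a) * ∑ b ∈ lukPaths (n - 1 - j), wtStep w b := by
  calc ∑ s ∈ lukPaths n, wtStepX x c₁ w s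
      = ∑ s ∈ lukPaths n, wtStep w s + ∑ j ∈ range n,
          ∑ s ∈ lukPaths n with s.getD j 0 = 0 ∧ ht s j = 0,
            wtStepX x c₁ w (s.take j) * (-x) * wtStep w (s.drop (j + 1)) := by
        rw [sum_congr rfl fun s hs => by
            rw [wtStepX_eq_wtStep_add_sum hw, (mem_lukPaths.1 hs).1], sum_add_distrib, sum_comm]
        simp only [Finset.sum_filter]
    _ = _ := by
        rw [mul_sum]
        congr 1
        refine sum_congr rfl fun j hj => ?_
        rw [sum_lukPaths_cut (fun a b => wtStepX x c₁ w a * (-x) * wtStep w b) (mem_range.1 hj),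
          ← mul_assoc, mul_comm (-x), sum_mul, sum_mul_sum]

/-- If `X(z) = Σ_ℓ Σ_{Γ∈L(ℓ)} wt₀(Γ) z^ℓ` is the generating series of the weights at
`x = 0` (where the weight of a horizontal step at height `0` is `c₁`), then
`Σ_ℓ Σ_{Γ∈L(ℓ)} wt_x(Γ) z^ℓ = X(z)·Σ_{m≥0}(−x·z·X(z))^m`, stated coefficientwise
(only `m ≤ n` contributes to the coefficient of `z^n`). -/
theorem weight_deformation_series (x c₁ : ℝ) (w : ℤ → ℕ → ℝ) (hw : w 0 0 = c₁)
    (X : PowerSeries ℝ)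
    (hX : X = PowerSeries.mk fun ℓ =>
      ∑ᶠ s ∈ {s : List ℤ | s.length = ℓ ∧ IsLuk s}, wtStep w s) :
    ∀ n : ℕ,
      (∑ᶠ s ∈ {s : List ℤ | s.length = n ∧ IsLuk s}, wtStepX x c₁ w s) =
        ∑ m ∈ Finset.range (n + 1),
          PowerSeries.coeff n (X * ((-x) • (PowerSeries.X * X)) ^ m) := by
  set Y := PowerSeries.mk fun n => ∑ s ∈ lukPaths n, wtStepX x c₁ w s
  have hcoeffX (n : ℕ) : PowerSeries.coeff n X = ∑ s ∈ lukPaths n, wtStep w s := by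
    rw [hX, PowerSeries.coeff_mk, finsum_mem_setOf_isLuk]
  have hY : Y = X + Y * ((-x) • (PowerSeries.X * X)) := by
    ext n
    rw [map_add, mul_smul_comm, mul_left_comm, PowerSeries.coeff_smul,
      PowerSeries.coeff_X_mul_mul]
    simp only [Y, PowerSeries.coeff_mk, hcoeffX, smul_eq_mul]
    exact sum_lukPaths_wtStepX hw n
  intro n
  rw [finsum_mem_setOf_isLuk, ← PowerSeries.coeff_mk n fun n => ∑ s ∈ lukPaths n, wtStepX x c₁ w s]
  exact PowerSeries.coeff_eq_sum_coeff_mul_pow_of_eq_add_mul hY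
    ⟨(-x) • X, (mul_smul_comm _ _ _).symm⟩ n
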